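/- Let G = (L ∪ R, E) be a finite bipartite graph with edge weights w : E → ℝ≥0 and let p ∈ [0, 1]. For S ⊆ L, let E_S denote the set of edges whose L-endpoint lies in S, and suppose M_S ⊆ E_S is a matching with the greedy domination property relative to E_S: every edge f ∈ E_S either belongs to M_S or shares an endpoint with some e ∈ M_S with w(e) ≥ w(f). Then ∑_{S ⊆ L} p^{|S|} (1−p)^{|L|−|S|} · w(M_S) ≥ (p/2) · ν(L), where ν(L) is the maximum weight of a matching in G. (That is, if each vertex of L is sampled independently with probability p and a greedy matching is built on the sampled side, its expected weight is at least p·OPT/2.) -/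

import Mathlib

/-!
Fix a maximum-weight matching `N`. For a sample `S`, charge each edge of `N` with `L`-endpoint
in `S` to an edge of `M S` that dominates it; as `N` is a matching, an edge of `M S` is charged
at most once through each of its two endpoints, so `w(N ∩ E_S) ≤ 2 w(M S)`. Each edge of `N`
lies in `E_S` with probability `p`, so averaging over `S` gives `p · w(N) ≤ 2 𝔼[w(M S)]`.
-/

open Finset

theorem Finset.sum_powerset_filter_mem_pow_mul_pow {α R : Type*} [DecidableEq α] [CommSemiring R]
    {s : Finset α} {a : α} (ha : a ∈ s) (x y : R) :
    ∑ t ∈ s.powerset with a ∈ t, x ^ #t * y ^ (#s - #t) = x * (x + y) ^ (#s - 1) := by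
  obtain ⟨u, hau, rfl⟩ : ∃ u, a ∉ u ∧ s = insert a u :=
    ⟨s.erase a, notMem_erase a s, (insert_erase ha).symm⟩
  have hnot : ∀ t ∈ u.powerset, a ∉ t := fun t ht hat => hau (mem_powerset.mp ht hat)
  rw [sum_filter, sum_powerset_insert hau, sum_eq_zero fun t ht => if_neg (hnot t ht), zero_add,
    card_insert_of_notMem hau, Nat.add_sub_cancel, ← sum_pow_mul_eq_add_pow, mul_sum]
  refine sum_congr rfl fun t ht => ?_
  rw [if_pos (mem_insert_self a t), card_insert_of_notMem (hnot t ht), Nat.add_sub_add_right]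
  ring

theorem Fintype.sum_filter_mem_pow_mul_one_sub_pow {L R : Type*} [Fintype L] [DecidableEq L]
    [CommRing R] (l : L) (p : R) :
    ∑ S : Finset L with l ∈ S, p ^ #S * (1 - p) ^ (Fintype.card L - #S) = p := by
  rw [← powerset_univ, ← card_univ, sum_powerset_filter_mem_pow_mul_pow (mem_univ l),
    add_sub_cancel, one_pow, mul_one]

theorem Fintype.sum_pow_mul_one_sub_pow_mul_sum_filter {α L R : Type*} [Fintype L] [DecidableEq L]
    [CommRing R] (N : Finset α) (g : α → L) (x : α → R) (p : R) :
    ∑ S : Finset L, p ^ #S * (1 - p) ^ (Fintype.card L - #S) * ∑ f ∈ N with g f ∈ S, x f =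
      p * ∑ f ∈ N, x f := by
  simp_rw [sum_filter, mul_sum, mul_ite, mul_zero]
  rw [sum_comm]
  refine Finset.sum_congr rfl fun f _ => ?_
  rw [← sum_filter, ← sum_mul, sum_filter_mem_pow_mul_one_sub_pow]

def IsBipartiteMatching {L R : Type*} (N : Finset (L × R)) : Prop :=
  ∀ e ∈ N, ∀ e' ∈ N, e ≠ e' → e.1 ≠ e'.1 ∧ e.2 ≠ e'.2

namespace IsBipartiteMatching

variable {L R : Type*} {N : Finset (L × R)}

theorem subset {N' : Finset (L × R)} (hN : IsBipartiteMatching N) (h : N' ⊆ N) :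
    IsBipartiteMatching N' :=
  fun e he e' he' hne => hN e (h he) e' (h he') hne

theorem card_filter_fst_eq_le_one [DecidableEq L] (hN : IsBipartiteMatching N) (l : L) :
    #{f ∈ N | f.1 = l} ≤ 1 :=
  card_le_one.mpr fun a ha b hb => by
    rw [mem_filter] at ha hb
    by_contra hab
    exact (hN a ha.1 b hb.1 hab).1 (ha.2.trans hb.2.symm)

theorem card_filter_snd_eq_le_one [DecidableEq R] (hN : IsBipartiteMatching N) (r : R) :
    #{f ∈ N | f.2 = r} ≤ 1 :=
  card_le_one.mpr fun a ha b hb => by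
    rw [mem_filter] at ha hb
    by_contra hab
    exact (hN a ha.1 b hb.1 hab).2 (ha.2.trans hb.2.symm)

theorem card_filter_adjacent_le_two [DecidableEq L] [DecidableEq R]
    (hN : IsBipartiteMatching N) (e : L × R) :
    #{f ∈ N | f.1 = e.1 ∨ f.2 = e.2} ≤ 2 := by
  rw [filter_or]
  exact (card_union_le _ _).trans
    (add_le_add (hN.card_filter_fst_eq_le_one e.1) (hN.card_filter_snd_eq_le_one e.2))

theorem sum_le_two_mul_sum_of_dominated (hN : IsBipartiteMatching N) {M : Finset (L × R)}
    (w : L × R → NNReal) (hdom : ∀ f ∈ N, ∃ e ∈ M, (e.1 = f.1 ∨ e.2 = f.2) ∧ w f ≤ w e) :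
    ∑ f ∈ N, w f ≤ 2 * ∑ e ∈ M, w e := by
  classical
  choose! g hgM hgadj hgw using hdom
  have hfiber : ∀ e ∈ M, ∑ f ∈ N with g f = e, w f ≤ 2 * w e := fun e _ => calc
    ∑ f ∈ N with g f = e, w f ≤ #{f ∈ N | g f = e} • w e :=
        sum_le_card_nsmul _ _ _ fun f hf => by
          rw [mem_filter] at hf
          exact hf.2 ▸ hgw f hf.1
    _ ≤ 2 • w e := by
        refine nsmul_le_nsmul_left bot_le ((card_le_card fun f hf => ?_).trans
          (hN.card_filter_adjacent_le_two e))
        obtain ⟨hfN, rfl⟩ := mem_filter.mp hf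
        exact mem_filter.mpr ⟨hfN, (hgadj f hfN).imp Eq.symm Eq.symm⟩
    _ = 2 * w e := by rw [nsmul_eq_mul, Nat.cast_ofNat]
  calc ∑ f ∈ N, w f = ∑ e ∈ M, ∑ f ∈ N with g f = e, w f := (sum_fiberwise_of_maps_to hgM _).symm
    _ ≤ ∑ e ∈ M, 2 * w e := sum_le_sum hfiber
    _ = 2 * ∑ e ∈ M, w e := (mul_sum ..).symm

end IsBipartiteMatching

theorem sampled_greedy_matching_expectation_general {L R : Type*} [Fintype L]
    (E : Finset (L × R)) (w : L × R → NNReal)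
    (p : ℝ) (hp0 : 0 ≤ p) (hp1 : p ≤ 1)
    (M : Finset L → Finset (L × R))
    (hdom : ∀ S : Finset L, ∀ f ∈ E, f.1 ∈ S →
      f ∈ M S ∨ ∃ e ∈ M S, (e.1 = f.1 ∨ e.2 = f.2) ∧ w f ≤ w e)
    (ν : NNReal)
    (hν : IsGreatest {x : NNReal | ∃ N ⊆ E,
      (∀ e ∈ N, ∀ e' ∈ N, e ≠ e' → e.1 ≠ e'.1 ∧ e.2 ≠ e'.2) ∧
      x = ∑ e ∈ N, w e} ν) :
    p / 2 * (ν : ℝ) ≤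
      ∑ S : Finset L,
        p ^ S.card * (1 - p) ^ (Fintype.card L - S.card) *
          ((∑ e ∈ M S, w e : NNReal) : ℝ) := by
  classical
  obtain ⟨N, hNE, hN, rfl⟩ := hν.1
  have hcharge (S : Finset L) : ∑ f ∈ N with f.1 ∈ S, w f ≤ 2 * ∑ e ∈ M S, w e :=
    (IsBipartiteMatching.subset hN (filter_subset _ N)).sum_le_two_mul_sum_of_dominated w
      fun f hf => by
        rw [mem_filter] at hf
        exact (hdom S f (hNE hf.1) hf.2).elim (fun h => ⟨f, h, Or.inl rfl, le_rfl⟩) id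
  have h1p : 0 ≤ 1 - p := sub_nonneg.mpr hp1
  calc p / 2 * ((∑ e ∈ N, w e : NNReal) : ℝ)
      = ∑ S : Finset L, p ^ #S * (1 - p) ^ (Fintype.card L - #S) *
          (((∑ f ∈ N with f.1 ∈ S, w f : NNReal) : ℝ) / 2) := by
        simp_rw [NNReal.coe_sum, ← mul_div_assoc, ← sum_div,
          Fintype.sum_pow_mul_one_sub_pow_mul_sum_filter]
        ring
    _ ≤ ∑ S : Finset L, p ^ #S * (1 - p) ^ (Fintype.card L - #S) *
          ((∑ e ∈ M S, w e : NNReal) : ℝ) := by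
        gcongr with S
        rw [div_le_iff₀ two_pos, mul_comm, ← NNReal.coe_ofNat, ← NNReal.coe_mul, NNReal.coe_le_coe]
        exact hcharge S

/-- **Expected weight of the greedy matching on a `p`-sample of `L` is at
least `p · OPT / 2`.**  A bipartite graph `G = (L ∪ R, E)` is modeled with
edges `E : Finset (L × R)` and weights `w : L × R → ℝ≥0`.  For every
`S ⊆ L`, `M S ⊆ E` is a matching using only edges with `L`-endpoint in `S`
and satisfying the greedy domination property relative to those edges.
With `ν` the maximum weight of a matching in `G` (characterized by
`IsGreatest`), we have
`∑_{S ⊆ L} p^|S| (1−p)^{|L|−|S|} · w(M S) ≥ (p/2) · ν`. -/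
theorem sampled_greedy_matching_expectation {L R : Type*} [Fintype L] [Fintype R]
    [DecidableEq L]
    (E : Finset (L × R)) (w : L × R → NNReal)
    (p : ℝ) (hp0 : 0 ≤ p) (hp1 : p ≤ 1)
    (M : Finset L → Finset (L × R))
    (hME : ∀ S, M S ⊆ E)
    (hMS : ∀ S, ∀ e ∈ M S, e.1 ∈ S)
    (hMmatch : ∀ S, ∀ e ∈ M S, ∀ e' ∈ M S, e ≠ e' → e.1 ≠ e'.1 ∧ e.2 ≠ e'.2)
    (hdom : ∀ S : Finset L, ∀ f ∈ E, f.1 ∈ S →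
      f ∈ M S ∨ ∃ e ∈ M S, (e.1 = f.1 ∨ e.2 = f.2) ∧ w f ≤ w e)
    (ν : NNReal)
    (hν : IsGreatest {x : NNReal | ∃ N ⊆ E,
      (∀ e ∈ N, ∀ e' ∈ N, e ≠ e' → e.1 ≠ e'.1 ∧ e.2 ≠ e'.2) ∧
      x = ∑ e ∈ N, w e} ν) :
    p / 2 * (ν : ℝ) ≤
      ∑ S : Finset L,
        p ^ S.card * (1 - p) ^ (Fintype.card L - S.card) *
          ((∑ e ∈ M S, w e : NNReal) : ℝ) :=
  sampled_greedy_matching_expectation_general E w p hp0 hp1 M hdom ν hν
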